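/- arXiv:1606.07185 — 3 statements merged into one kernel-verified Lean document; each statement's English description precedes it below -/
import Mathlib

section
/- Let X be a pseudometric space and let γ : [0,∞) → X be 1-Lipschitz. Suppose there exist T ≥ 0 and δ ≥ 0 such that dist(γ(s), γ(t)) ≥ |s − t| − δ for all s, t ≥ T. Then γ is (2T + δ)-almost minimizing, i.e. dist(γ(0), γ(t)) ≥ t − (2T + δ) for all t ≥ 0. -/
/-!
Past time `T` the ray is almost minimizing by hypothesis, and `γ 0` lies within `T` of `γ T`,
so the triangle inequality through `γ T` costs at most `2T` more. Before time `T` the bound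
`t - (2T + δ)` is nonpositive, because `δ ≥ 0` is forced by the hypothesis at `s = t = T`.
-/

lemma sub_le_dist_of_dist_le_of_tail {X : Type*} [PseudoMetricSpace X] {γ : ℝ → X}
    {T δ t : ℝ} (h0T : dist (γ 0) (γ T) ≤ T)
    (h : ∀ s t : ℝ, T ≤ s → T ≤ t → dist (γ s) (γ t) ≥ |s - t| - δ) (hTt : T ≤ t) :
    t - (2 * T + δ) ≤ dist (γ 0) (γ t) := by
  have hTt' : t - T - δ ≤ dist (γ T) (γ t) := by
    simpa [abs_sub_comm T t, abs_of_nonneg (sub_nonneg.mpr hTt)] using h T t le_rfl hTt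
  calc t - (2 * T + δ) ≤ dist (γ T) (γ t) - dist (γ 0) (γ T) := by linarith
    _ ≤ dist (γ 0) (γ t) := by linarith [dist_triangle_left (γ T) (γ t) (γ 0)]

theorem almost_minimizing_of_asymptotically_almost_minimizing_general
    {X : Type*} [PseudoMetricSpace X] (γ : ℝ → X)
    (hlip : ∀ s t : ℝ, 0 ≤ s → 0 ≤ t → dist (γ s) (γ t) ≤ |s - t|)
    (T δ : ℝ) (hT : 0 ≤ T)
    (h : ∀ s t : ℝ, T ≤ s → T ≤ t → dist (γ s) (γ t) ≥ |s - t| - δ) :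
    ∀ t : ℝ, 0 ≤ t → dist (γ 0) (γ t) ≥ t - (2 * T + δ) := by
  intro t ht
  rcases le_total t T with htT | hTt
  · have hδ : 0 ≤ δ := by simpa using h T T le_rfl le_rfl
    linarith [dist_nonneg (x := γ 0) (y := γ t)]
  · have h0T : dist (γ 0) (γ T) ≤ T := by
      simpa [abs_of_nonneg hT] using hlip 0 T le_rfl hT
    exact sub_le_dist_of_dist_le_of_tail h0T h hTt

/-- Quantitative content of one implication of Proposition 2.2 (Eberlein–Ledrappier):
an asymptotically almost minimizing `1`-Lipschitz ray is `(2T + δ)`-almost minimizing. -/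
theorem almost_minimizing_of_asymptotically_almost_minimizing
    {X : Type*} [PseudoMetricSpace X] (γ : ℝ → X)
    (hlip : ∀ s t : ℝ, 0 ≤ s → 0 ≤ t → dist (γ s) (γ t) ≤ |s - t|)
    (T δ : ℝ) (hT : 0 ≤ T) (hδ : 0 ≤ δ)
    (h : ∀ s t : ℝ, T ≤ s → T ≤ t → dist (γ s) (γ t) ≥ |s - t| - δ) :
    ∀ t : ℝ, 0 ≤ t → dist (γ 0) (γ t) ≥ t - (2 * T + δ) :=
  almost_minimizing_of_asymptotically_almost_minimizing_general γ hlip T δ hT h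
end

section
/- Let Γ be a subgroup of SL(2,ℝ) acting on the hyperbolic upper half-plane ℍ by Möbius transformations, let o ∈ ℍ, and let γ : [0,∞) → ℍ be the vertical ray from o, i.e. Re(γ(t)) = Re(o) and Im(γ(t)) = Im(o)·e^t. Then the following are equivalent: (1) there exists C ≥ 0 such that dist(g • o, γ(t)) ≥ t − C for every g ∈ Γ and every t ≥ 0 (the projection of γ to ℍ/Γ is almost minimizing); (2) the set of heights {Im(g • o) : g ∈ Γ} is bounded above (the ideal point ∞ is not a horospherical limit point of Γ). -/
open scoped UpperHalfPlane MatrixGroups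

/-!
Everything is read off the Busemann function `z ↦ log (Im o / Im z)` of the vertical ray. The
estimate `|log Im z - log Im w| ≤ dist z w` bounds `dist (g • o) (γ t) - t` below by
`log (Im o / Im (g • o))`, which is bounded below exactly when the heights are bounded above.
Conversely, `e^d ≤ 2 cosh d = ((Re z - Re w)² + Im z² + Im w²) / (Im z Im w)`, evaluated at
`w = γ t` as `t → ∞`, shows `dist z (γ t) - t ≤ log (Im o / Im z) + o(1)`; so `dist ≥ t - C`
along the ray forces `Im z ≤ Im o · e^C`.
-/

open Real Filter

lemma nonpos_of_eventually_mul_le {α : Type*} {l : Filter α} [l.NeBot] {f : α → ℝ}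
    (hf : Tendsto f l atTop) {a b : ℝ} (h : ∀ᶠ x in l, a * f x ≤ b) : a ≤ 0 := by
  by_contra! ha
  obtain ⟨x, hle, hgt⟩ := (h.and ((hf.const_mul_atTop ha).eventually_gt_atTop b)).exists
  exact hle.not_gt hgt

namespace UpperHalfPlane

lemma exp_dist_mul_im_mul_im_le (z w : ℍ) :
    exp (dist z w) * (z.im * w.im) ≤ (z.re - w.re) ^ 2 + z.im ^ 2 + w.im ^ 2 := by
  have hpos : 0 < 2 * z.im * w.im := by have := z.im_pos; have := w.im_pos; positivity
  have hcosh : exp (dist z w) ≤ 2 * cosh (dist z w) := by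
    rw [cosh_eq]; linarith [exp_pos (-dist z w)]
  rw [cosh_dist', mul_div_assoc', le_div_iff₀ hpos] at hcosh
  linarith

section VerticalRay

variable {o : ℍ} {γ : ℝ → ℍ}

lemma log_im_add_sub_log_im_le_dist (him : ∀ t, (γ t).im = o.im * exp t) (z : ℍ) (t : ℝ) :
    log o.im + t - log z.im ≤ dist z (γ t) := by
  have hlog : log (γ t).im = log o.im + t := by
    rw [him, log_mul o.im_pos.ne' (exp_ne_zero t), log_exp]
  calc log o.im + t - log z.im ≤ dist (log z.im) (log (γ t).im) := by
        rw [← hlog, dist_comm, Real.dist_eq]; exact le_abs_self _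
    _ ≤ dist z (γ t) := dist_log_im_le z (γ t)

lemma im_le_of_forall_dist_ge (hre : ∀ t, (γ t).re = o.re) (him : ∀ t, (γ t).im = o.im * exp t)
    {z : ℍ} {C : ℝ} (hz : ∀ t, 0 ≤ t → dist z (γ t) ≥ t - C) :
    z.im ≤ o.im * exp C := by
  have ho := o.im_pos
  /- Multiplying `e^(t - C) ≤ e^(dist z (γ t))` by `Im z · Im (γ t)` leaves a multiple of
  `e^(2t)` bounded by a constant. -/
  have hquad : ∀ t, 0 ≤ t →
      o.im * (z.im * exp (-C) - o.im) * exp t ^ 2 ≤ (z.re - o.re) ^ 2 + z.im ^ 2 := by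
    intro t ht
    have hexp : exp (t - C) * (z.im * (γ t).im) ≤ exp (dist z (γ t)) * (z.im * (γ t).im) :=
      mul_le_mul_of_nonneg_right (exp_le_exp.2 (hz t ht)) (mul_pos z.im_pos (γ t).im_pos).le
    have hbound := hexp.trans (exp_dist_mul_im_mul_im_le z (γ t))
    rw [hre, him, sub_eq_add_neg, exp_add] at hbound
    linarith
  have hnonpos := nonpos_of_eventually_mul_le ((tendsto_pow_atTop two_ne_zero).comp tendsto_exp_atTop)
    (eventually_atTop.2 ⟨0, hquad⟩)
  have hscaled : z.im * exp (-C) ≤ o.im := by nlinarith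
  rwa [exp_neg, ← div_eq_mul_inv, div_le_iff₀ (exp_pos C)] at hscaled

end VerticalRay

end UpperHalfPlane

/-- Instance of Proposition 2.2 (Eberlein–Ledrappier) at the ideal point `∞`: the
vertical ray from `o` projects to an almost minimizing ray in `ℍ/Γ` if and only if the
orbit heights `Im (g • o)` are bounded above (i.e. `∞` is not a horospherical limit
point of `Γ`). -/
theorem almost_minimizing_iff_heights_bddAbove
    (Γ : Subgroup SL(2, ℝ)) (o : ℍ) (γ : ℝ → ℍ)
    (hre : ∀ t : ℝ, (γ t).re = o.re)
    (him : ∀ t : ℝ, (γ t).im = o.im * Real.exp t) :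
    (∃ C : ℝ, 0 ≤ C ∧ ∀ g ∈ Γ, ∀ t : ℝ, 0 ≤ t → dist (g • o) (γ t) ≥ t - C) ↔
      (∃ B : ℝ, ∀ g ∈ Γ, ((g • o : ℍ)).im ≤ B) := by
  constructor
  · rintro ⟨C, -, hC⟩
    exact ⟨o.im * exp C, fun g hg => UpperHalfPlane.im_le_of_forall_dist_ge hre him (hC g hg)⟩
  · rintro ⟨B, hB⟩
    have hoB : o.im ≤ B := by simpa using hB 1 Γ.one_mem
    refine ⟨log B - log o.im, by linarith [log_le_log o.im_pos hoB], fun g hg t _ => ?_⟩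
    have hlog := log_le_log (g • o).im_pos (hB g hg)
    linarith [UpperHalfPlane.log_im_add_sub_log_im_le_dist him (g • o) t]
end

section
/- Let Γ be a subgroup of SL(2,ℝ) acting on the hyperbolic upper half-plane ℍ by Möbius transformations, let o, o' ∈ ℍ, and let γ, γ' : [0,∞) → ℍ be the vertical rays from o and o' respectively (Re(γ(t)) = Re(o), Im(γ(t)) = Im(o)·e^t, and similarly for γ'). Then there exists C ≥ 0 with dist(g • o, γ(t)) ≥ t − C for all g ∈ Γ and t ≥ 0 if and only if there exists C' ≥ 0 with dist(g • o', γ'(t)) ≥ t − C' for all g ∈ Γ and t ≥ 0. That is, whether the projected ray toward the ideal point ∞ is almost minimizing in ℍ/Γ does not depend on the choice of basepoint. -/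
/-!
For `t ≥ 0` the map `z ↦ re z + i e^t im z` does not increase hyperbolic distance: in
`cosh d = 1 + |z - w|² / (2 im z im w)` it divides the `|re z - re w|²` term by `e^{2t}` and leaves
the rest unchanged. Hence the vertical rays from `o` and `o'` stay within `dist o o'` of each
other, and since `Γ` acts by isometries, moving both the basepoint and the ray a bounded distance
changes the almost minimizing constant by a bounded amount.
-/

open scoped UpperHalfPlane MatrixGroups

section AlmostMinimizing

variable {G X : Type*} [Group G] [PseudoMetricSpace X] [MulAction G X] [IsIsometricSMul G X]

/-- The ray `γ` projects to an almost minimizing ray in `X / S`, measured from the orbit of `o`. -/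
def IsAlmostMinimizingRay (S : Set G) (o : X) (γ : ℝ → X) : Prop :=
  ∃ C : ℝ, 0 ≤ C ∧ ∀ g ∈ S, ∀ t : ℝ, 0 ≤ t → dist (g • o) (γ t) ≥ t - C

theorem IsAlmostMinimizingRay.of_dist_le {S : Set G} {o o' : X} {γ γ' : ℝ → X} {D : ℝ}
    (h : IsAlmostMinimizingRay S o γ) (hD : ∀ t, 0 ≤ t → dist (γ t) (γ' t) ≤ D) :
    IsAlmostMinimizingRay S o' γ' := by
  obtain ⟨C, hC, hmin⟩ := h
  have hD₀ : 0 ≤ D := dist_nonneg.trans (hD 0 le_rfl)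
  refine ⟨C + dist o o' + D, by positivity, fun g hg t ht => ?_⟩
  calc t - (C + dist o o' + D) ≤ dist (g • o) (γ t) - dist o o' - D := by
        linarith [hmin g hg t ht]
    _ ≤ dist (g • o') (γ' t) := by
        have := dist_triangle4 (g • o) (g • o') (γ' t) (γ t)
        rw [dist_smul, dist_comm (γ' t)] at this
        linarith [hD t ht]

theorem isAlmostMinimizingRay_congr {S : Set G} {o o' : X} {γ γ' : ℝ → X} {D : ℝ}
    (hD : ∀ t, 0 ≤ t → dist (γ t) (γ' t) ≤ D) :
    IsAlmostMinimizingRay S o γ ↔ IsAlmostMinimizingRay S o' γ' :=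
  ⟨fun h => h.of_dist_le hD,
    fun h => h.of_dist_le fun t ht => (dist_comm (γ t) (γ' t)).symm ▸ hD t ht⟩

end AlmostMinimizing

namespace UpperHalfPlane

theorem dist_le_of_vertical_stretch {z w z' w' : ℍ} {s : ℝ} (hs : 1 ≤ s)
    (hre : z'.re = z.re) (him : z'.im = z.im * s)
    (hre' : w'.re = w.re) (him' : w'.im = w.im * s) :
    dist z' w' ≤ dist z w := by
  have hz := z.im_pos
  have hw := w.im_pos
  rw [← abs_of_nonneg (dist_nonneg (x := z')), ← abs_of_nonneg (dist_nonneg (x := z)),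
    ← Real.cosh_le_cosh, cosh_dist, cosh_dist, Complex.dist_eq_re_im, Complex.dist_eq_re_im,
    Real.sq_sqrt (by positivity), Real.sq_sqrt (by positivity)]
  simp only [coe_re, coe_im, hre, him, hre', him', add_le_add_iff_left]
  rw [div_le_div_iff₀ (by positivity) (by positivity)]
  nlinarith [mul_nonneg (mul_nonneg (sq_nonneg (z.re - w.re)) (mul_pos hz hw).le)
    (mul_nonneg (sub_nonneg.2 hs) (by linarith : (0 : ℝ) ≤ s + 1))]

theorem dist_vertical_rays_le {o o' : ℍ} {γ γ' : ℝ → ℍ}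
    (hre : ∀ t, (γ t).re = o.re) (him : ∀ t, (γ t).im = o.im * Real.exp t)
    (hre' : ∀ t, (γ' t).re = o'.re) (him' : ∀ t, (γ' t).im = o'.im * Real.exp t)
    {t : ℝ} (ht : 0 ≤ t) :
    dist (γ t) (γ' t) ≤ dist o o' :=
  dist_le_of_vertical_stretch (Real.one_le_exp ht) (hre t) (him t) (hre' t) (him' t)

end UpperHalfPlane

/-- Instance at `∞` of Lemma 2.7: whether the projected vertical ray toward the ideal
point `∞` is almost minimizing in `ℍ/Γ` does not depend on the choice of basepoint. -/
theorem almost_minimizing_independent_of_basepoint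
    (Γ : Subgroup SL(2, ℝ)) (o o' : ℍ) (γ γ' : ℝ → ℍ)
    (hre : ∀ t : ℝ, (γ t).re = o.re)
    (him : ∀ t : ℝ, (γ t).im = o.im * Real.exp t)
    (hre' : ∀ t : ℝ, (γ' t).re = o'.re)
    (him' : ∀ t : ℝ, (γ' t).im = o'.im * Real.exp t) :
    (∃ C : ℝ, 0 ≤ C ∧ ∀ g ∈ Γ, ∀ t : ℝ, 0 ≤ t → dist (g • o) (γ t) ≥ t - C) ↔
      (∃ C' : ℝ, 0 ≤ C' ∧ ∀ g ∈ Γ, ∀ t : ℝ, 0 ≤ t → dist (g • o') (γ' t) ≥ t - C') :=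
  isAlmostMinimizingRay_congr (S := (Γ : Set SL(2, ℝ)))
    fun _ ht => UpperHalfPlane.dist_vertical_rays_le hre him hre' him' ht
end
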